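/- Let n ≥ 1, let Pₙ be the path graph on vertices Δ = {α₁,…,αₙ}, and let J₀ ⊆ Δ. Let U ⊆ W be admissible subsets in Λ*(Pₙ,J₀). Then the interval [U,W] in Λ*(Pₙ,J₀) is relatively complemented if and only if there does not exist a vertex α ∈ J₀ such that α ∈ W − U and α is not adjacent in Pₙ to any vertex of U. -/

import Mathlib

open SimpleGraph Finset

/-- `ReachIn G U a b` : `b` is reachable from `a` within the subgraph of `G`
induced on the vertex set `U`. -/
def ReachIn {n : ℕ} (G : SimpleGraph (Fin n)) (U : Finset (Fin n)) (a b : Fin n) : Prop :=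
  Relation.ReflTransGen (fun x y => G.Adj x y ∧ x ∈ U ∧ y ∈ U) a b

/-- `U` is admissible (with respect to `J₀`) if no connected component of the
subgraph of `G` induced on `U` is entirely contained in `J₀`: every component
contains a vertex outside `J₀`. -/
def Admissible {n : ℕ} (G : SimpleGraph (Fin n)) (J₀ U : Finset (Fin n)) : Prop :=
  ∀ a ∈ U, ∃ b, ReachIn G U a b ∧ b ∉ J₀

/-- A subset `A` is connected if the induced subgraph on `A` is connected. -/
def ConnIn {n : ℕ} (G : SimpleGraph (Fin n)) (A : Finset (Fin n)) : Prop :=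
  ∀ a ∈ A, ∀ b ∈ A, ReachIn G A a b

theorem ReachIn.mono {n : ℕ} {G : SimpleGraph (Fin n)} {U V : Finset (Fin n)} (h : U ⊆ V)
    {a b : Fin n} (hr : ReachIn G U a b) : ReachIn G V a b :=
  by
    unfold ReachIn at hr ⊢
    induction hr with
    | refl => exact Relation.ReflTransGen.refl
    | tail _ hxy ih => exact Relation.ReflTransGen.tail ih ⟨hxy.1, h hxy.2.1, h hxy.2.2⟩

theorem admissible_empty {n : ℕ} (G : SimpleGraph (Fin n)) (J₀ : Finset (Fin n)) :
    Admissible G J₀ ∅ := fun a ha => absurd ha (Finset.notMem_empty a)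

theorem admissible_union {n : ℕ} {G : SimpleGraph (Fin n)} {J₀ U V : Finset (Fin n)}
    (hU : Admissible G J₀ U) (hV : Admissible G J₀ V) : Admissible G J₀ (U ∪ V) := by
  intro a ha
  rcases Finset.mem_union.mp ha with h | h
  · obtain ⟨b, hb, hbJ⟩ := hU a h
    exact ⟨b, hb.mono Finset.subset_union_left, hbJ⟩
  · obtain ⟨b, hb, hbJ⟩ := hV a h
    exact ⟨b, hb.mono Finset.subset_union_right, hbJ⟩

/-- `Λ*(G, J₀)` : the poset of admissible subsets, ordered by inclusion. -/
def CrossSection {n : ℕ} (G : SimpleGraph (Fin n)) (J₀ : Finset (Fin n)) : Type :=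
  {U : Finset (Fin n) // Admissible G J₀ U}

namespace CrossSection

variable {n : ℕ} {G : SimpleGraph (Fin n)} {J₀ : Finset (Fin n)}

instance : PartialOrder (CrossSection G J₀) :=
  inferInstanceAs (PartialOrder {U : Finset (Fin n) // Admissible G J₀ U})

instance : DecidableEq (CrossSection G J₀) :=
  inferInstanceAs (DecidableEq {U : Finset (Fin n) // Admissible G J₀ U})

noncomputable instance : Fintype (CrossSection G J₀) :=
  Fintype.ofInjective (Subtype.val : CrossSection G J₀ → Finset (Fin n)) Subtype.val_injective

open Classical in
/-- The underlying set of the meet of two admissible sets: the largest admissible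
subset contained in the intersection. -/
noncomputable def meetFinset (G : SimpleGraph (Fin n)) (J₀ : Finset (Fin n))
    (U V : Finset (Fin n)) : Finset (Fin n) :=
  ((U ∩ V).powerset.filter (fun W => Admissible G J₀ W)).sup id

theorem admissible_sup {s : Finset (Finset (Fin n))}
    (h : ∀ W ∈ s, Admissible G J₀ W) : Admissible G J₀ (s.sup id) :=
  Finset.sup_induction (by simpa using admissible_empty G J₀)
    (fun a ha b hb => by simpa using admissible_union ha hb) h

theorem admissible_meetFinset (G : SimpleGraph (Fin n)) (J₀ U V : Finset (Fin n)) :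
    Admissible G J₀ (meetFinset G J₀ U V) := by
  classical
  exact admissible_sup (fun W hW => (Finset.mem_filter.mp hW).2)

theorem meetFinset_subset_left (G : SimpleGraph (Fin n)) (J₀ U V : Finset (Fin n)) :
    meetFinset G J₀ U V ≤ U := by
  classical
  unfold meetFinset
  refine Finset.sup_le (fun W hW => ?_)
  have := Finset.mem_powerset.mp (Finset.mem_filter.mp hW).1
  exact fun x hx => (Finset.mem_inter.mp (this hx)).1

theorem meetFinset_subset_right (G : SimpleGraph (Fin n)) (J₀ U V : Finset (Fin n)) :
    meetFinset G J₀ U V ≤ V := by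
  classical
  unfold meetFinset
  refine Finset.sup_le (fun W hW => ?_)
  have := Finset.mem_powerset.mp (Finset.mem_filter.mp hW).1
  exact fun x hx => (Finset.mem_inter.mp (this hx)).2

theorem subset_meetFinset {G : SimpleGraph (Fin n)} {J₀ U V W : Finset (Fin n)}
    (hW : Admissible G J₀ W) (h1 : W ⊆ U) (h2 : W ⊆ V) : W ≤ meetFinset G J₀ U V := by
  classical
  unfold meetFinset
  exact Finset.le_sup (f := id)
    (Finset.mem_filter.mpr ⟨Finset.mem_powerset.mpr (Finset.subset_inter h1 h2), hW⟩)

noncomputable instance : Lattice (CrossSection G J₀) :=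
  { (inferInstance : PartialOrder (CrossSection G J₀)) with
    sup := fun U V => ⟨U.1 ∪ V.1, admissible_union U.2 V.2⟩
    le_sup_left := fun U V => show U.1 ⊆ U.1 ∪ V.1 from Finset.subset_union_left
    le_sup_right := fun U V => show V.1 ⊆ U.1 ∪ V.1 from Finset.subset_union_right
    sup_le := fun U V W h1 h2 => show U.1 ∪ V.1 ⊆ W.1 from Finset.union_subset h1 h2
    inf := fun U V => ⟨meetFinset G J₀ U.1 V.1, admissible_meetFinset G J₀ U.1 V.1⟩
    inf_le_left := fun U V => meetFinset_subset_left G J₀ U.1 V.1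
    inf_le_right := fun U V => meetFinset_subset_right G J₀ U.1 V.1
    le_inf := fun W U V h1 h2 => subset_meetFinset W.2 h1 h2 }

instance : OrderBot (CrossSection G J₀) where
  bot := ⟨∅, admissible_empty G J₀⟩
  bot_le := fun U => show (∅ : Finset (Fin n)) ⊆ U.1 from Finset.empty_subset _

@[simp] theorem sup_val (U V : CrossSection G J₀) : (U ⊔ V).1 = U.1 ∪ V.1 := rfl

@[simp] theorem inf_val (U V : CrossSection G J₀) : (U ⊓ V).1 = meetFinset G J₀ U.1 V.1 := rfl

end CrossSection

/-- The interval `[u,w]` is relatively complemented: for every subinterval `[x,y]`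
and every `z` in it there is a relative complement `z'`. -/
def RelCompInterval {α : Type*} [Lattice α] (u w : α) : Prop :=
  ∀ x y z : α, u ≤ x → x ≤ z → z ≤ y → y ≤ w →
    ∃ z', x ≤ z' ∧ z' ≤ y ∧ z ⊔ z' = y ∧ z ⊓ z' = x

/-!
If every `J₀`-vertex of `W \ U` has a neighbour in `U`, then for `U ≤ x ≤ z ≤ y ≤ W` the set
`x ∪ (y \ z)` is a relative complement of `z` in `[x, y]`: each `J₀`-vertex it adds to `x` is
attached to `U ⊆ x`, so it is admissible, and its intersection with `z` is exactly `x`.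

Conversely, let `α ∈ J₀ ∩ (W \ U)` have no neighbour in `U`. Take `y ∈ [U, W]` minimal with
`α ∈ y`. Inside `y`, `α` reaches a vertex outside `J₀` through some neighbour `c` and then
avoiding `α`; let `z` be `U` together with the component of `c` in `y \ {α}`, an admissible set
strictly above `U` (as `c ∉ U`). A complement of `z` in `[U, y]` must contain `α`, so it is `y`
by minimality, and then the meet is `z ≠ U`.
-/

theorem not_relCompInterval_of_forall_sup_eq {α : Type*} [Lattice α] {u w y z : α}
    (huz : u ≤ z) (hzy : z ≤ y) (hyw : y ≤ w) (hzu : z ≠ u)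
    (hy : ∀ z', u ≤ z' → z' ≤ y → z ⊔ z' = y → z' = y) : ¬ RelCompInterval u w := by
  intro h
  obtain ⟨z', huz', hz'y, hsup, hinf⟩ := h u y z le_rfl huz hzy hyw
  rw [hy z' huz' hz'y hsup, inf_eq_left.2 hzy] at hinf
  exact hzu hinf

variable {n : ℕ} {G : SimpleGraph (Fin n)}

namespace ReachIn

theorem symm {S : Finset (Fin n)} {a b : Fin n} (h : ReachIn G S a b) : ReachIn G S b a := by
  induction h with
  | refl => exact .refl
  | tail _ hcd ih => exact Relation.ReflTransGen.head ⟨hcd.1.symm, hcd.2.2, hcd.2.1⟩ ih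

theorem exists_adj_erase {S : Finset (Fin n)} {a b : Fin n} (h : ReachIn G S a b) (hab : a ≠ b) :
    ∃ c ∈ S, G.Adj a c ∧ ReachIn G (S.erase a) c b := by
  suffices b = a ∨ ∃ c ∈ S, G.Adj a c ∧ ReachIn G (S.erase a) c b from
    this.resolve_left hab.symm
  clear hab
  induction h with
  | refl => exact .inl rfl
  | @tail d e _ hde ih =>
    by_cases hea : e = a
    · exact .inl hea
    by_cases hda : d = a
    · subst hda
      exact .inr ⟨e, hde.2.2, hde.1, .refl⟩
    obtain ⟨c, hcS, hac, hcd⟩ := ih.resolve_left hda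
    exact .inr ⟨c, hcS, hac,
      hcd.tail ⟨hde.1, mem_erase.2 ⟨hda, hde.2.1⟩, mem_erase.2 ⟨hea, hde.2.2⟩⟩⟩

end ReachIn

open Classical in
noncomputable def inducedComponent (G : SimpleGraph (Fin n)) (S : Finset (Fin n)) (c : Fin n) :
    Finset (Fin n) :=
  {v ∈ S | ReachIn G S c v}

theorem mem_inducedComponent {S : Finset (Fin n)} {c v : Fin n} :
    v ∈ inducedComponent G S c ↔ v ∈ S ∧ ReachIn G S c v := by
  classical
  exact mem_filter

theorem inducedComponent_subset (S : Finset (Fin n)) (c : Fin n) :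
    inducedComponent G S c ⊆ S :=
  fun _ hv => (mem_inducedComponent.1 hv).1

theorem mem_inducedComponent_self {S : Finset (Fin n)} {c : Fin n} (hc : c ∈ S) :
    c ∈ inducedComponent G S c :=
  mem_inducedComponent.2 ⟨hc, .refl⟩

theorem ReachIn.inducedComponent {S : Finset (Fin n)} {c v : Fin n} (h : ReachIn G S c v) :
    ReachIn G (inducedComponent G S c) c v := by
  induction h with
  | refl => exact .refl
  | @tail d e hcd hde ih =>
    exact ih.tail ⟨hde.1, mem_inducedComponent.2 ⟨hde.2.1, hcd⟩,
      mem_inducedComponent.2 ⟨hde.2.2, hcd.tail hde⟩⟩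

theorem admissible_inducedComponent {J₀ S : Finset (Fin n)} {c b : Fin n} (hcb : ReachIn G S c b)
    (hb : b ∉ J₀) : Admissible G J₀ (inducedComponent G S c) := by
  intro v hv
  have hvc : ReachIn G (inducedComponent G S c) v c :=
    (mem_inducedComponent.1 hv).2.inducedComponent.symm
  exact ⟨b, hvc.trans hcb.inducedComponent, hb⟩

namespace CrossSection

variable {J₀ : Finset (Fin n)}

theorem meetFinset_eq_of_inter_eq {U V X : Finset (Fin n)} (hX : Admissible G J₀ X)
    (h : U ∩ V = X) : meetFinset G J₀ U V = X := by
  refine le_antisymm ?_ (subset_meetFinset hX (h ▸ inter_subset_left) (h ▸ inter_subset_right))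
  exact h ▸ subset_inter (meetFinset_subset_left G J₀ U V) (meetFinset_subset_right G J₀ U V)

theorem relCompInterval_of_forall_adj (U W : CrossSection G J₀)
    (H : ∀ α ∈ J₀, α ∈ W.1 → α ∉ U.1 → ∃ β ∈ U.1, G.Adj α β) : RelCompInterval U W := by
  intro x y z hUx hxz hzy hyW
  have hadm : Admissible G J₀ (x.1 ∪ (y.1 \ z.1)) := by
    intro a ha
    by_cases hax : a ∈ x.1
    · obtain ⟨b, hab, hb⟩ := x.2 a hax
      exact ⟨b, hab.mono subset_union_left, hb⟩
    by_cases haJ : a ∈ J₀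
    · have hay := (mem_sdiff.1 ((mem_union.1 ha).resolve_left hax)).1
      obtain ⟨β, hβU, haβ⟩ := H a haJ (hyW hay) (fun haU => hax (hUx haU))
      obtain ⟨b, hβb, hb⟩ := x.2 β (hUx hβU)
      exact ⟨b, .head ⟨haβ, ha, mem_union_left _ (hUx hβU)⟩ (hβb.mono subset_union_left), hb⟩
    · exact ⟨a, .refl, haJ⟩
  refine ⟨⟨_, hadm⟩, subset_union_left, union_subset (hxz.trans hzy) sdiff_subset,
    Subtype.ext ?_, Subtype.ext ?_⟩
  · change z.1 ∪ (x.1 ∪ (y.1 \ z.1)) = y.1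
    rw [← union_assoc, union_eq_left.2 hxz, union_sdiff_of_subset hzy]
  · refine meetFinset_eq_of_inter_eq x.2 ?_
    rw [inter_union_distrib_left, inter_eq_right.2 hxz, inter_sdiff_self, union_empty]

theorem not_relCompInterval_of_not_adj (U W : CrossSection G J₀) (hUW : U ≤ W) {α : Fin n}
    (hαJ : α ∈ J₀) (hαW : α ∈ W.1) (hαU : α ∉ U.1) (hα : ∀ β ∈ U.1, ¬ G.Adj α β) :
    ¬ RelCompInterval U W := by
  obtain ⟨y, ⟨hUy, hyW, hαy⟩, hmin⟩ :=
    exists_minimal_of_wellFoundedLT (fun y : CrossSection G J₀ => U ≤ y ∧ y ≤ W ∧ α ∈ y.1)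
      ⟨W, hUW, le_rfl, hαW⟩
  obtain ⟨b, hαb, hb⟩ := y.2 α hαy
  obtain ⟨c, hcy, hαc, hcb⟩ := hαb.exists_adj_erase (fun h => hb (h ▸ hαJ))
  let z : CrossSection G J₀ :=
    ⟨U.1 ∪ inducedComponent G (y.1.erase α) c,
      admissible_union U.2 (admissible_inducedComponent hcb hb)⟩
  have hcz : c ∈ z.1 :=
    mem_union_right _ (mem_inducedComponent_self (mem_erase.2 ⟨hαc.ne.symm, hcy⟩))
  have hαz : α ∉ z.1 := fun h => (mem_union.1 h).elim hαU
    fun h => notMem_erase α y.1 (inducedComponent_subset _ _ h)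
  refine not_relCompInterval_of_forall_sup_eq (z := z) subset_union_left
    (union_subset hUy ((inducedComponent_subset _ _).trans (erase_subset _ _))) hyW
    (fun h => hα c (h ▸ hcz) hαc) fun z' hUz' hz'y hsup => ?_
  have hαz' : α ∈ z'.1 := by
    have : α ∈ (z ⊔ z').1 := hsup ▸ hαy
    exact (mem_union.1 this).resolve_left hαz
  exact le_antisymm hz'y (hmin ⟨hUz', hz'y.trans hyW, hαz'⟩ hz'y)

end CrossSection

theorem stmt_5_general (n : ℕ) (J₀ : Finset (Fin n))
    (U W : CrossSection (pathGraph n) J₀) (hUW : U ≤ W) :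
    RelCompInterval U W ↔
      ¬ ∃ α : Fin n, α ∈ J₀ ∧ α ∈ W.1 ∧ α ∉ U.1 ∧
          ∀ β ∈ U.1, ¬ (pathGraph n).Adj α β := by
  refine ⟨fun hrc ⟨α, hαJ, hαW, hαU, hα⟩ =>
    CrossSection.not_relCompInterval_of_not_adj U W hUW hαJ hαW hαU hα hrc, fun h => ?_⟩
  refine CrossSection.relCompInterval_of_forall_adj U W fun α hαJ hαW hαU => ?_
  by_contra! hα
  exact h ⟨α, hαJ, hαW, hαU, hα⟩

theorem stmt_5 (n : ℕ) (hn : 1 ≤ n) (J₀ : Finset (Fin n))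
    (U W : CrossSection (pathGraph n) J₀) (hUW : U ≤ W) :
    RelCompInterval U W ↔
      ¬ ∃ α : Fin n, α ∈ J₀ ∧ α ∈ W.1 ∧ α ∉ U.1 ∧
          ∀ β ∈ U.1, ¬ (pathGraph n).Adj α β :=
  stmt_5_general n J₀ U W hUW
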